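/- The CRN with reactions 2X → Y, Z → Y, Z → ∅ does not reverse-robustly compute f(x) = ⌊x/2⌋ with output species Y: from the initial configuration with 2 copies of X, the all-zero configuration is bireachable, and from the all-zero configuration no configuration with a positive count of Y is forward-reachable, while f(2) = 1 > 0. -/
import Mathlib


inductive Sp | X | Y | Z
  deriving DecidableEq

open Sp

def single (s : Sp) : Sp → ℕ := fun t => if t = s then 1 else 0

/-- Reactions: `2X → Y`, `Z → Y`, `Z → ∅`. -/
def R : Set ((Sp → ℕ) × (Sp → ℕ)) :=
  { (fun t => 2 * single X t, single Y),
    (single Z, single Y),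
    (single Z, fun _ => 0) }

def Step (R : Set ((Sp → ℕ) × (Sp → ℕ))) (x y : Sp → ℕ) : Prop :=
  ∃ r ∈ R, (∀ l, r.1 l ≤ x l) ∧ y = fun l => x l - r.1 l + r.2 l

def BiStep (R : Set ((Sp → ℕ) × (Sp → ℕ))) (x y : Sp → ℕ) : Prop :=
  ∃ r ∈ R, ((∀ l, r.1 l ≤ x l) ∧ y = fun l => x l - r.1 l + r.2 l) ∨
           ((∀ l, r.2 l ≤ x l) ∧ y = fun l => x l - r.2 l + r.1 l)

/-- Valid initial configuration with `n` copies of `X`. -/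
def init (n : ℕ) : Sp → ℕ := fun t => n * single X t

/-- Stability: the output count of `Y` can no longer change via forward reactions. -/
def Stable (o : Sp → ℕ) : Prop :=
  ∀ o' : Sp → ℕ, Relation.ReflTransGen (Step R) o o' → o' Y = o Y

/-- The CRN reverse-robustly computes `f(x) = ⌊x/2⌋` with output species `Y`. -/
def RRComputes : Prop :=
  ∀ n : ℕ, ∀ c : Sp → ℕ, Relation.ReflTransGen (BiStep R) (init n) c →
    ∃ o : Sp → ℕ, Relation.ReflTransGen (Step R) c o ∧ Stable o ∧ o Y = n / 2

lemma zero_dead : ∀ c : Sp → ℕ, Relation.ReflTransGen (Step R) (fun _ => 0) c → c = fun _ => 0 := by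
  intro c h
  induction h with
  | refl => rfl
  | tail _ hstep ih =>
    obtain ⟨r, hr, hle, heq⟩ := hstep
    subst ih
    rcases hr with h1 | h1 | h1 <;> subst h1
    · exact absurd (hle X) (by simp [single])
    · exact absurd (hle Z) (by simp [single])
    · exact absurd (hle Z) (by simp [single])

lemma bipath : Relation.ReflTransGen (BiStep R) (init 2) (fun _ => 0) := by
  have s1 : BiStep R (init 2) (single Y) := by
    refine ⟨(fun t => 2 * single X t, single Y), Or.inl rfl, Or.inl ⟨?_, ?_⟩⟩
    · intro l; cases l <;> simp [init, single]
    · funext l; cases l <;> simp [init, single]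
  have s2 : BiStep R (single Y) (single Z) := by
    refine ⟨(single Z, single Y), Or.inr (Or.inl rfl), Or.inr ⟨?_, ?_⟩⟩
    · intro l; cases l <;> simp [single]
    · funext l; cases l <;> simp [single]
  have s3 : BiStep R (single Z) (fun _ => 0) := by
    refine ⟨(single Z, fun _ => 0), Or.inr (Or.inr rfl), Or.inl ⟨?_, ?_⟩⟩
    · intro l; cases l <;> simp [single]
    · funext l; cases l <;> simp [single]
  exact (Relation.ReflTransGen.refl.tail s1).tail s2 |>.tail s3

/-- the CRN does not reverse-robustly compute `f(x) = ⌊x/2⌋`: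
from `{2X}` the all-zero configuration is bireachable, from which no
configuration with positive `Y` count is forward-reachable, yet `f(2) = 1 > 0`. -/
theorem trap_not_reverse_robust :
    Relation.ReflTransGen (BiStep R) (init 2) (fun _ => 0) ∧
    (∀ c : Sp → ℕ, Relation.ReflTransGen (Step R) (fun _ => 0) c → c Y = 0) ∧
    (2 : ℕ) / 2 = 1 ∧
    ¬ RRComputes := by
  refine ⟨bipath, fun c h => by rw [zero_dead c h], rfl, ?_⟩
  intro hrr
  obtain ⟨o, ho, _, hY⟩ := hrr 2 (fun _ => 0) bipath
  rw [zero_dead o ho] at hY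
  simp at hY
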